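/- arXiv:2111.09517 — 8 statements merged into one kernel-verified Lean document; each statement's English description precedes it below -/
import Mathlib

section
/- Let V be a finite-dimensional real inner product space and K : V × V → V a symmetric bilinear map with g(K(X,Y),Z) totally symmetric and [K,K] = 0. Then there exists an orthonormal basis e_1,…,e_n of V and real numbers λ_1,…,λ_n such that K(e_i,e_i) = λ_i e_i for all i and K(e_i,e_j) = 0 for all i ≠ j. -/
/-!
Each `K X` is self-adjoint and the `K X` commute, so they have a common orthonormal eigenbasis
`e_i`. For `i ≠ j` the vector `K(e_i, e_j) = K(e_j, e_i)` then lies in both `ℝ e_j` and `ℝ e_i`,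
which meet only in `0`.
-/

open scoped RealInnerProductSpace
open Module

section JointEigenbasis

variable {𝕜 E ι : Type*} [RCLike 𝕜] [NormedAddCommGroup E] [InnerProductSpace 𝕜 E]
  [FiniteDimensional 𝕜 E]

-- Only finitely many of the `V i` are nonzero, so the finite-index construction
-- `subordinateOrthonormalBasis` applies to those.
theorem DirectSum.IsInternal.exists_orthonormalBasis_subordinate [DecidableEq ι]
    {V : ι → Submodule 𝕜 E} (hV : DirectSum.IsInternal V)
    (hV' : OrthogonalFamily 𝕜 (fun i => V i) fun i => (V i).subtypeₗᵢ) :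
    ∃ (b : OrthonormalBasis (Fin (finrank 𝕜 E)) 𝕜 E) (f : Fin (finrank 𝕜 E) → ι),
      ∀ a, b a ∈ V (f a) := by
  have : Fintype {i // V i ≠ ⊥} :=
    (WellFoundedGT.finite_ne_bot_of_iSupIndep hV.submodule_iSupIndep).fintype
  have hW := DirectSum.isInternal_ne_bot_iff.mpr hV
  have hW' := hV'.comp (Subtype.val_injective (p := fun i => V i ≠ ⊥))
  exact ⟨hW.subordinateOrthonormalBasis rfl hW',
    fun a => (hW.subordinateOrthonormalBasisIndex rfl a hW').1,
    fun a => hW.subordinateOrthonormalBasis_subordinate rfl a hW'⟩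

open Function in
theorem LinearMap.IsSymmetric.exists_orthonormalBasis_eigenvectors_of_pairwise_commute
    {T : ι → Module.End 𝕜 E} (hT : ∀ i, (T i).IsSymmetric) (hC : Pairwise (Commute on T)) :
    ∃ (b : OrthonormalBasis (Fin (finrank 𝕜 E)) 𝕜 E) (χ : Fin (finrank 𝕜 E) → ι → 𝕜),
      ∀ a i, T i (b a) = χ a i • b a := by
  classical
  obtain ⟨b, χ, hb⟩ := (directSum_isInternal_of_pairwise_commute hT hC)
    |>.exists_orthonormalBasis_subordinate (orthogonalFamily_iInf_eigenspaces hT)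
  exact ⟨b, χ, fun a i => Module.End.mem_eigenspace_iff.mp ((Submodule.mem_iInf _).mp (hb a) i)⟩

end JointEigenbasis

theorem eq_zero_of_mem_span_singleton_of_inner_eq_zero {𝕜 E : Type*} [RCLike 𝕜]
    [NormedAddCommGroup E] [InnerProductSpace 𝕜 E] {x u v : E} (hu : x ∈ 𝕜 ∙ u)
    (hv : x ∈ 𝕜 ∙ v) (huv : inner 𝕜 u v = 0) : x = 0 := by
  have hortho : (𝕜 ∙ u) ⟂ (𝕜 ∙ v) := Submodule.isOrtho_span.mpr (by simpa using huv)
  exact Submodule.disjoint_def.mp hortho.disjoint x hu hv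

/-- if `[K,K] = 0` then `K` is simultaneously orthogonally
diagonalizable: there is an orthonormal basis `e_i` with `K(e_i,e_i) = λ_i e_i`
and `K(e_i,e_j) = 0` for `i ≠ j`. -/
theorem stmt_7 {V : Type*} [NormedAddCommGroup V] [InnerProductSpace ℝ V]
    [FiniteDimensional ℝ V] (K : V →ₗ[ℝ] V →ₗ[ℝ] V)
    (hKcomm : ∀ X Y : V, K X Y = K Y X)
    (hCsym : ∀ X Y Z : V, ⟪K X Y, Z⟫ = ⟪K X Z, Y⟫)
    (hKK : ∀ X Y Z : V, K X (K Y Z) = K Y (K X Z)) :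
    ∃ (b : OrthonormalBasis (Fin (Module.finrank ℝ V)) ℝ V)
      (lam : Fin (Module.finrank ℝ V) → ℝ),
      (∀ i, K (b i) (b i) = lam i • b i) ∧
      (∀ i j, i ≠ j → K (b i) (b j) = 0) := by
  obtain ⟨b, χ, hb⟩ :=
    LinearMap.IsSymmetric.exists_orthonormalBasis_eigenvectors_of_pairwise_commute (T := K)
      (fun X Y Z => (hCsym X Y Z).trans (real_inner_comm _ _))
      (fun X Y _ => LinearMap.ext (hKK X Y))
  refine ⟨b, fun a => χ a (b a), fun a => hb a (b a), fun i j hij => ?_⟩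
  exact eq_zero_of_mem_span_singleton_of_inner_eq_zero
    (Submodule.mem_span_singleton.mpr ⟨_, (hb j (b i)).symm⟩)
    (Submodule.mem_span_singleton.mpr ⟨_, (hKcomm (b i) (b j) ▸ hb i (b j)).symm⟩)
    (b.orthonormal.2 hij.symm)
end

section
/- Let V be a finite-dimensional real inner product space and K : V × V → V a symmetric bilinear map with g(K(X,Y),Z) totally symmetric and [K,K] = 0. Then the commutative associative product X ∘ Y := K(X,Y) has a (two-sided) unit if and only if K is non-degenerate, i.e., the linear map X ↦ K_X is injective. -/
/-!
Non-degeneracy makes `t := ∑ᵢ bᵢ ∘ bᵢ` (over a basis `b`) a regular element: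
`K t = ∑ᵢ (K bᵢ)²` is a sum of squares of self-adjoint operators, so `K t v = 0` forces
`K bᵢ v = K v bᵢ = 0` for all `i`, i.e. `K v = 0`. Multiplication by `t` is then bijective,
so `t ∘ e = t` for some `e`, and cancelling `t` in `K t * K e = K (t ∘ e) = K t` gives `K e = 1`.
-/

open scoped RealInnerProductSpace

open Function

theorem LinearMap.IsSymmetric.apply_eq_zero_of_sum_mul_self_apply_eq_zero {V ι : Type*}
    [NormedAddCommGroup V] [InnerProductSpace ℝ V] {S : ι → V →ₗ[ℝ] V}
    (hS : ∀ i, (S i).IsSymmetric) (s : Finset ι) {v : V} (hv : (∑ i ∈ s, S i * S i) v = 0)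
    {i : ι} (hi : i ∈ s) : S i v = 0 := by
  have hsum : ∑ j ∈ s, ‖S j v‖ ^ 2 = 0 := by
    calc ∑ j ∈ s, ‖S j v‖ ^ 2 = ∑ j ∈ s, ⟪S j (S j v), v⟫ := by
          refine Finset.sum_congr rfl fun j _ => ?_
          rw [hS j, real_inner_self_eq_norm_sq]
      _ = ⟪(∑ j ∈ s, S j * S j) v, v⟫ := by
          simp only [LinearMap.sum_apply, Module.End.mul_apply, sum_inner]
      _ = 0 := by rw [hv, inner_zero_left]
  simpa using (Finset.sum_eq_zero_iff_of_nonneg fun j _ => sq_nonneg ‖S j v‖).1 hsum i hi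

theorem mul_eq_apply_apply_of_comm {R M : Type*} [CommSemiring R] [AddCommMonoid M]
    [Module R M] (K : M →ₗ[R] M →ₗ[R] M) (hKcomm : ∀ X Y : M, K X Y = K Y X)
    (hKK : ∀ X Y Z : M, K X (K Y Z) = K Y (K X Z)) (X Y : M) : K X * K Y = K (K X Y) := by
  ext Z
  rw [Module.End.mul_apply, hKcomm (K X Y) Z, ← hKK X Z Y, hKcomm Z Y]

theorem exists_apply_eq_one_of_injective_apply {𝕜 V : Type*} [Field 𝕜] [AddCommGroup V]
    [Module 𝕜 V] [FiniteDimensional 𝕜 V] (K : V →ₗ[𝕜] V →ₗ[𝕜] V)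
    (hmul : ∀ X Y : V, K X * K Y = K (K X Y)) {t : V} (ht : Injective (K t)) :
    ∃ e : V, K e = 1 := by
  obtain ⟨e, he⟩ := LinearMap.surjective_of_injective ht t
  refine ⟨e, LinearMap.ext fun X => ht ?_⟩
  rw [← Module.End.mul_apply, hmul, he, Module.End.one_apply]

theorem exists_injective_apply_of_injective {V : Type*} [NormedAddCommGroup V]
    [InnerProductSpace ℝ V] [FiniteDimensional ℝ V] (K : V →ₗ[ℝ] V →ₗ[ℝ] V)
    (hKcomm : ∀ X Y : V, K X Y = K Y X) (hsymm : ∀ X : V, (K X).IsSymmetric)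
    (hmul : ∀ X Y : V, K X * K Y = K (K X Y)) (hinj : Injective K) :
    ∃ t : V, Injective (K t) := by
  let b := Module.finBasis ℝ V
  refine ⟨∑ i, K (b i) (b i), (injective_iff_map_eq_zero _).2 fun v hv => ?_⟩
  have hsq : K (∑ i, K (b i) (b i)) = ∑ i, K (b i) * K (b i) := by
    simp only [map_sum, hmul]
  rw [hsq] at hv
  have hvb : ∀ i, K v (b i) = 0 := fun i => by
    rw [hKcomm]
    exact LinearMap.IsSymmetric.apply_eq_zero_of_sum_mul_self_apply_eq_zero
      (fun i => hsymm (b i)) Finset.univ hv (Finset.mem_univ i)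
  exact hinj (b.ext fun i => by rw [hvb, map_zero, LinearMap.zero_apply])

/-- on a statistical vector space with `[K,K] = 0`, the product
`X ∘ Y := K(X,Y)` has a (two-sided) unit iff `K` is non-degenerate, i.e. the
linear map `X ↦ K_X` is injective. -/
theorem stmt_8 {V : Type*} [NormedAddCommGroup V] [InnerProductSpace ℝ V]
    [FiniteDimensional ℝ V] (K : V →ₗ[ℝ] V →ₗ[ℝ] V)
    (hKcomm : ∀ X Y : V, K X Y = K Y X)
    (hCsym : ∀ X Y Z : V, ⟪K X Y, Z⟫ = ⟪K X Z, Y⟫)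
    (hKK : ∀ X Y Z : V, K X (K Y Z) = K Y (K X Z)) :
    (∃ e : V, ∀ X : V, K e X = X ∧ K X e = X)
      ↔ Function.Injective fun X : V => K X := by
  constructor
  · rintro ⟨e, he⟩ X Y hXY
    rw [← (he X).2, ← (he Y).2]
    exact LinearMap.congr_fun hXY e
  · intro hinj
    have hmul := mul_eq_apply_apply_of_comm K hKcomm hKK
    have hsymm : ∀ X : V, (K X).IsSymmetric := fun X u w => by
      rw [hCsym, real_inner_comm]
    obtain ⟨t, ht⟩ := exists_injective_apply_of_injective K hKcomm hsymm hmul hinj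
    obtain ⟨e, he⟩ := exists_apply_eq_one_of_injective_apply K hmul ht
    refine ⟨e, fun X => ⟨?_, ?_⟩⟩
    · rw [he, Module.End.one_apply]
    · rw [hKcomm, he, Module.End.one_apply]
end

section
/- Let V be a finite-dimensional real inner product space and K : V × V → V a symmetric bilinear map with g(K(X,Y),Z) totally symmetric, [K,K] = 0, and K non-degenerate. Then (V, ∘, g) with X ∘ Y := K(X,Y) is a semisimple Frobenius algebra: the product is commutative, associative, has a unit, satisfies g(X∘Y, Z) = g(X, Y∘Z), and V is isomorphic as an algebra to ℝ^n with component-wise multiplication. -/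
/-!
The operators `K X` are pairwise commuting and self-adjoint, so `V` is the sum of their joint
eigenspaces `E χ = {x | ∀ X, K X x = χ X • x}`. By `[K,K] = 0`, `K x y` is a joint eigenvector for
both `χ` and `ψ` when `x ∈ E χ`, `y ∈ E ψ`, hence vanishes if `χ ≠ ψ`; inside one `E χ` we have
`χ x • y = K x y = χ y • x`. Non-degeneracy forces `χ x ≠ 0` for `0 ≠ x ∈ E χ`, so every nonzero
`E χ` is a line spanned by an idempotent. These idempotents form a basis with multiplication
table `eᵢ ∘ eⱼ = δᵢⱼ eᵢ`, and its coordinate map is the required isomorphism with `ℝⁿ`.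
-/

open scoped RealInnerProductSpace
open Module

section OrthogonalIdempotents

theorem linearIndependent_of_orthogonal_idempotents {R M ι : Type*} [Field R] [AddCommGroup M]
    [Module R M] [DecidableEq ι] {K : M →ₗ[R] M →ₗ[R] M} {e : ι → M}
    (he : ∀ i j, K (e i) (e j) = if i = j then e i else 0) (he0 : ∀ i, e i ≠ 0) :
    LinearIndependent R e := by
  rw [linearIndependent_iff']
  intro s c hsum i hi
  have hci : c i • e i = 0 := by
    simpa [map_sum, map_smul, he, hi] using congrArg (K (e i)) hsum
  exact (smul_eq_zero.mp hci).resolve_right (he0 i)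

theorem Module.Basis.equivFun_apply_eq_mul_of_orthogonal_idempotents {R M ι : Type*} [CommRing R]
    [AddCommGroup M] [Module R M] [Fintype ι] [DecidableEq ι] {K : M →ₗ[R] M →ₗ[R] M}
    (b : Basis ι R M) (hb : ∀ i j, K (b i) (b j) = if i = j then b i else 0) (x y : M) :
    b.equivFun (K x y) = b.equivFun x * b.equivFun y := by
  have hbilin : K.compr₂ b.equivFun.toLinearMap =
      (LinearMap.mul R (ι → R)).compl₁₂ b.equivFun.toLinearMap b.equivFun.toLinearMap := by
    refine b.ext fun i => b.ext fun j => ?_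
    ext k
    simp only [LinearMap.compr₂_apply, LinearMap.compl₁₂_apply, LinearEquiv.coe_coe,
      LinearMap.mul_apply', hb, Pi.mul_apply, Basis.equivFun_self]
    split_ifs <;> simp_all
  exact LinearMap.congr_fun₂ hbilin x y

end OrthogonalIdempotents

section JointEigenspace

variable {𝕜 M : Type*} [Field 𝕜] [AddCommGroup M] [Module 𝕜 M] (K : M →ₗ[𝕜] M →ₗ[𝕜] M)

def jointEigenspace (χ : M → 𝕜) : Submodule 𝕜 M :=
  ⨅ X, End.eigenspace (K X) (χ X)

variable {K}

theorem mem_jointEigenspace_iff {χ : M → 𝕜} {x : M} :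
    x ∈ jointEigenspace K χ ↔ ∀ X, K X x = χ X • x := by
  simp only [jointEigenspace, Submodule.mem_iInf, End.mem_eigenspace_iff]

theorem smul_eq_smul_of_mem_jointEigenspace (hKcomm : ∀ X Y, K X Y = K Y X) {χ : M → 𝕜}
    {x y : M} (hx : x ∈ jointEigenspace K χ) (hy : y ∈ jointEigenspace K χ) :
    χ x • y = χ y • x := by
  rw [← mem_jointEigenspace_iff.mp hy, ← mem_jointEigenspace_iff.mp hx, hKcomm]

theorem apply_eq_zero_of_mem_jointEigenspace_of_ne (hKcomm : ∀ X Y, K X Y = K Y X)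
    (hKK : ∀ X Y Z, K X (K Y Z) = K Y (K X Z)) {χ ψ : M → 𝕜} {x y : M}
    (hx : x ∈ jointEigenspace K χ) (hy : y ∈ jointEigenspace K ψ) (hχψ : χ ≠ ψ) :
    K x y = 0 := by
  obtain ⟨a, ha⟩ := Function.ne_iff.mp hχψ
  have hψ : K a (K x y) = ψ a • K x y := by
    rw [hKK, mem_jointEigenspace_iff.mp hy, map_smul]
  have hχ : K a (K x y) = χ a • K x y := by
    rw [hKcomm x y, hKK, mem_jointEigenspace_iff.mp hx, map_smul]
  have hsub : (χ a - ψ a) • K x y = 0 := by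
    rw [sub_smul, ← hχ, ← hψ, sub_self]
  exact (smul_eq_zero.mp hsub).resolve_left (sub_ne_zero.mpr ha)

section Diagonalizable

variable (hKcomm : ∀ X Y, K X Y = K Y X) (hKK : ∀ X Y Z, K X (K Y Z) = K Y (K X Z))
  (hnd : Function.Injective fun X : M => K X) (htop : ⨆ χ, jointEigenspace K χ = ⊤)
include hKcomm hKK hnd htop

/-- If `χ x = 0`, then `K x` kills `E χ`, and every other joint eigenspace too, so `K x = 0`. -/
theorem apply_self_ne_zero_of_mem_jointEigenspace {χ : M → 𝕜} {x : M}
    (hx : x ∈ jointEigenspace K χ) (hx0 : x ≠ 0) : χ x ≠ 0 := by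
  intro hχx
  refine hx0 (hnd ?_)
  suffices ⊤ ≤ LinearMap.ker (K x) by
    ext Z
    simpa using this Submodule.mem_top
  rw [← htop]
  refine iSup_le fun ψ Z hZ => LinearMap.mem_ker.mpr ?_
  by_cases hψ : χ = ψ
  · subst hψ
    rw [mem_jointEigenspace_iff.mp hZ, hχx, zero_smul]
  · exact apply_eq_zero_of_mem_jointEigenspace_of_ne hKcomm hKK hx hZ hψ

theorem exists_mem_jointEigenspace_apply_self_eq_one {χ : M → 𝕜}
    (hχ : jointEigenspace K χ ≠ ⊥) :
    ∃ e ∈ jointEigenspace K χ, e ≠ 0 ∧ χ e = 1 := by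
  obtain ⟨x, hx, hx0⟩ := Submodule.exists_mem_ne_zero_of_ne_bot hχ
  have hχx := apply_self_ne_zero_of_mem_jointEigenspace hKcomm hKK hnd htop hx hx0
  have he : (χ x)⁻¹ • x ∈ jointEigenspace K χ := Submodule.smul_mem _ _ hx
  refine ⟨_, he, smul_ne_zero (inv_ne_zero hχx) hx0, smul_left_injective 𝕜 hx0 ?_⟩
  simpa [smul_smul, hχx] using (smul_eq_smul_of_mem_jointEigenspace hKcomm hx he).symm

theorem exists_basis_orthogonal_idempotents [FiniteDimensional 𝕜 M] :
    ∃ b : Basis (Fin (finrank 𝕜 M)) 𝕜 M,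
      ∀ i j, K (b i) (b j) = if i = j then b i else 0 := by
  classical
  choose e he he0 he1 using fun χ : {χ : M → 𝕜 // jointEigenspace K χ ≠ ⊥} =>
    exists_mem_jointEigenspace_apply_self_eq_one hKcomm hKK hnd htop χ.2
  have htable : ∀ i j, K (e i) (e j) = if i = j then e i else 0 := by
    intro i j
    split_ifs with hij
    · rw [hij, mem_jointEigenspace_iff.mp (he j), he1, one_smul]
    · exact apply_eq_zero_of_mem_jointEigenspace_of_ne hKcomm hKK (he i) (he j)
        (fun h => hij (Subtype.ext h))
  have hli := linearIndependent_of_orthogonal_idempotents htable he0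
  have hspan : ⊤ ≤ Submodule.span 𝕜 (Set.range e) := by
    rw [← htop]
    refine iSup_le fun χ => ?_
    by_cases hχ : jointEigenspace K χ = ⊥
    · simp [hχ]
    · intro y hy
      have hy_eq := smul_eq_smul_of_mem_jointEigenspace hKcomm (he ⟨χ, hχ⟩) hy
      rw [(he1 ⟨χ, hχ⟩ : χ (e ⟨χ, hχ⟩) = 1), one_smul] at hy_eq
      rw [hy_eq]
      exact Submodule.smul_mem _ _ (Submodule.subset_span ⟨_, rfl⟩)
  let b := Basis.mk hli hspan
  refine ⟨b.reindex (b.indexEquiv (finBasis 𝕜 M)), fun i j => ?_⟩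
  simp [b, htable]

end Diagonalizable

end JointEigenspace

theorem iSup_jointEigenspace_eq_top {𝕜 V : Type*} [RCLike 𝕜] [NormedAddCommGroup V]
    [InnerProductSpace 𝕜 V] [FiniteDimensional 𝕜 V] {K : V →ₗ[𝕜] V →ₗ[𝕜] V}
    (hsym : ∀ X, (K X).IsSymmetric) (hKK : ∀ X Y Z, K X (K Y Z) = K Y (K X Z)) :
    ⨆ χ, jointEigenspace K χ = ⊤ :=
  LinearMap.IsSymmetric.iSup_iInf_eq_top_of_commute hsym fun X Y _ =>
    LinearMap.ext (hKK X Y)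

/-- a statistical vector space with totally symmetric `K`,
`[K,K] = 0` and non-degenerate `K` is a semisimple Frobenius algebra:
the product `X ∘ Y := K(X,Y)` is commutative, associative, unital, satisfies
`g(X∘Y,Z) = g(X,Y∘Z)`, and `(V,∘)` is isomorphic to `ℝ^n` with componentwise
multiplication. -/
theorem stmt_9 {V : Type*} [NormedAddCommGroup V] [InnerProductSpace ℝ V]
    [FiniteDimensional ℝ V] (K : V →ₗ[ℝ] V →ₗ[ℝ] V)
    (hKcomm : ∀ X Y : V, K X Y = K Y X)
    (hCsym : ∀ X Y Z : V, ⟪K X Y, Z⟫ = ⟪K X Z, Y⟫)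
    (hKK : ∀ X Y Z : V, K X (K Y Z) = K Y (K X Z))
    (hnd : Function.Injective fun X : V => K X) :
    (∀ X Y : V, K X Y = K Y X) ∧
    (∀ X Y Z : V, K (K X Y) Z = K X (K Y Z)) ∧
    (∃ e : V, ∀ X : V, K e X = X ∧ K X e = X) ∧
    (∀ X Y Z : V, ⟪K X Y, Z⟫ = ⟪X, K Y Z⟫) ∧
    (∃ φ : V ≃ₗ[ℝ] (Fin (Module.finrank ℝ V) → ℝ),
      ∀ X Y : V, φ (K X Y) = φ X * φ Y) := by
  have hsym : ∀ X, (K X).IsSymmetric := fun X Y Z => (hCsym X Y Z).trans (real_inner_comm _ _)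
  obtain ⟨b, hb⟩ := exists_basis_orthogonal_idempotents hKcomm hKK hnd
    (iSup_jointEigenspace_eq_top hsym hKK)
  have hmul := b.equivFun_apply_eq_mul_of_orthogonal_idempotents hb
  refine ⟨hKcomm, fun X Y Z => ?_, ⟨b.equivFun.symm 1, fun X => ?_⟩, fun X Y Z => ?_,
    b.equivFun, hmul⟩
  · rw [hKcomm (K X Y) Z, hKK Z X Y, hKcomm Z Y]
  · have hunit : K (b.equivFun.symm 1) X = X :=
      b.equivFun.injective (by rw [hmul, LinearEquiv.apply_symm_apply, one_mul])
    exact ⟨hunit, hKcomm X _ ▸ hunit⟩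
  · rw [hKcomm X Y, hCsym Y X Z, real_inner_comm]
end

section
/- Let e_1,…,e_n be an orthonormal basis of a real inner product space V, and suppose K is the symmetric bilinear map defined by K(e_i,e_i) = μ_1 e_1 + … + μ_{i-1} e_{i-1} + λ_i e_i and K(e_i,e_j) = μ_i e_j for i < j, where the numbers satisfy μ_i = (λ_i − √(λ_i² − 4A_{i−1}))/2 and A_i = A_{i−1} − μ_i² with A_0 = A and λ_i² − 4A_{i−1} ≥ 0. Then the trilinear form g(K(X,Y),Z) is totally symmetric and g(K(X,W),K(Y,Z)) − g(K(Y,W),K(X,Z)) = A(g(X,W)g(Y,Z) − g(Y,W)g(X,Z)) for all X,Y,Z,W, i.e., K has constant sectional K-curvature A. -/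
/-!
On basis vectors everything is explicit: `K(e_i, e_j) = μ_{min(i,j)} e_{max(i,j)}` for `i ≠ j`,
and the recursion says exactly `λ_i μ_i - μ_i² = A_{i-1} = A - Σ_{j<i} μ_j²`, which is what makes
`g(K(e_i, e_i), K(e_j, e_j)) = A + μ_i²` for `i < j`. Once the cubic form is symmetric, the
curvature identity is equivalent to `K_X K_Y Z - K_Y K_X Z = A (g(Y, Z) X - g(X, Z) Y)`; on basis
vectors `e_i, e_j, e_k` with `i < j` this is trivial unless `k ∈ {i, j}`, where it comes down to
that inner product. Both identities are multilinear, so checking them on a basis suffices.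
-/

open scoped RealInnerProductSpace

theorem mul_sub_sq_eq_of_eq_sub_sqrt {l m a : ℝ} (h : 0 ≤ l ^ 2 - 4 * a)
    (hm : m = (l - √(l ^ 2 - 4 * a)) / 2) : l * m - m ^ 2 = a := by
  rw [hm]
  linear_combination (-1 / 4 : ℝ) * Real.sq_sqrt h

theorem sum_sq_add_eq_of_eq_sub_sq {n : ℕ} {mu : Fin n → ℝ} {a : ℕ → ℝ}
    (ha : ∀ i : Fin n, a (i + 1) = a i - mu i ^ 2) (i : Fin n) :
    ∑ j ∈ Finset.univ.filter (· < i), mu j ^ 2 + a i = a 0 := by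
  have htel : ∑ j ∈ Finset.univ.filter (· < i), mu j ^ 2
      = ∑ k ∈ Finset.range i, (a k - a (k + 1)) := by
    refine Finset.sum_bij (fun j _ => j.val) ?_ (fun _ _ _ _ => Fin.ext) ?_ ?_
    · simp
    · intro k hk
      have hki : k < i := Finset.mem_range.1 hk
      exact ⟨⟨k, hki.trans i.isLt⟩, Finset.mem_filter.2 ⟨Finset.mem_univ _, hki⟩, rfl⟩
    · intro j _
      rw [ha j]
      ring
  rw [htel, Finset.sum_range_sub']
  ring

section Extension

variable {V ι : Type*} [NormedAddCommGroup V] [InnerProductSpace ℝ V]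
  (K : V →ₗ[ℝ] V →ₗ[ℝ] V) (b : Module.Basis ι ℝ V)

theorem inner_apply_comm_of_basis
    (h : ∀ i j k, ⟪K (b i) (b j), b k⟫ = ⟪K (b i) (b k), b j⟫) (X Y Z : V) :
    ⟪K X Y, Z⟫ = ⟪K X Z, Y⟫ := by
  have hC : K.compr₂ (innerₗ V) = LinearMap.lflip.toLinearMap ∘ₗ K.compr₂ (innerₗ V) :=
    b.ext fun i => b.ext fun j => b.ext fun k => by simpa using h i j k
  simpa using congr($hC X Y Z)

theorem apply_apply_sub_apply_apply_of_basis {A : ℝ}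
    (h : ∀ i j k, K (b i) (K (b j) (b k)) - K (b j) (K (b i) (b k))
      = A • (⟪b j, b k⟫ • b i - ⟪b i, b k⟫ • b j)) (X Y Z : V) :
    K X (K Y Z) - K Y (K X Z) = A • (⟪Y, Z⟫ • X - ⟪X, Z⟫ • Y) := by
  let KK : V →ₗ[ℝ] V →ₗ[ℝ] V →ₗ[ℝ] V := (LinearMap.llcomp ℝ V V V ∘ₗ K).compl₂ K
  let T : V →ₗ[ℝ] V →ₗ[ℝ] V →ₗ[ℝ] V := (LinearMap.smulRightₗ ∘ₗ innerₗ V).flip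
  have hKK : KK - KK.flip = A • (T - T.flip) :=
    b.ext fun i => b.ext fun j => b.ext fun k => by simpa [KK, T] using h i j k
  simpa [KK, T] using congr($hKK X Y Z)

theorem inner_apply_sub_inner_apply_eq {A : ℝ}
    (hsymm : ∀ X Y Z : V, ⟪K X Y, Z⟫ = ⟪K X Z, Y⟫)
    (hR : ∀ X Y Z : V, K X (K Y Z) - K Y (K X Z) = A • (⟪Y, Z⟫ • X - ⟪X, Z⟫ • Y))
    (X Y Z W : V) :
    ⟪K X W, K Y Z⟫ - ⟪K Y W, K X Z⟫ = A * (⟪X, W⟫ * ⟪Y, Z⟫ - ⟪Y, W⟫ * ⟪X, Z⟫) := by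
  rw [hsymm X, hsymm Y, ← inner_sub_left, hR, real_inner_smul_left, inner_sub_left,
    real_inner_smul_left, real_inner_smul_left]
  ring

end Extension

structure IsOpozdaNormalForm {V : Type*} [NormedAddCommGroup V] [InnerProductSpace ℝ V] {n : ℕ}
    (b : OrthonormalBasis (Fin n) ℝ V) (K : V →ₗ[ℝ] V →ₗ[ℝ] V) (lam mu : Fin n → ℝ) : Prop where
  comm : ∀ X Y : V, K X Y = K Y X
  diag : ∀ i, K (b i) (b i) = (∑ j ∈ Finset.univ.filter (· < i), mu j • b j) + lam i • b i
  off : ∀ i j, i < j → K (b i) (b j) = mu i • b j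

namespace IsOpozdaNormalForm

variable {V : Type*} [NormedAddCommGroup V] [InnerProductSpace ℝ V] {n : ℕ}
  {b : OrthonormalBasis (Fin n) ℝ V} {K : V →ₗ[ℝ] V →ₗ[ℝ] V} {lam mu : Fin n → ℝ}

theorem off' (hK : IsOpozdaNormalForm b K lam mu) {i j : Fin n} (h : j < i) :
    K (b i) (b j) = mu j • b i := by
  rw [hK.comm, hK.off j i h]

theorem inner_diag (hK : IsOpozdaNormalForm b K lam mu) (a k : Fin n) :
    ⟪K (b a) (b a), b k⟫ = if k < a then mu k else if k = a then lam a else 0 := by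
  rw [hK.diag, inner_add_left, sum_inner]
  simp only [real_inner_smul_left, b.inner_eq_ite, mul_ite, mul_one, mul_zero,
    Finset.sum_ite_eq', Finset.mem_filter, Finset.mem_univ, true_and]
  rcases lt_trichotomy k a with h | rfl | h
  · simp [h, h.ne']
  · simp
  · simp [h.not_gt, h.ne, h.ne']

theorem inner_diag_of_lt (hK : IsOpozdaNormalForm b K lam mu) {a k : Fin n} (h : k < a) :
    ⟪K (b a) (b a), b k⟫ = mu k := by
  rw [hK.inner_diag, if_pos h]

theorem inner_diag_of_gt (hK : IsOpozdaNormalForm b K lam mu) {a k : Fin n} (h : a < k) :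
    ⟪K (b a) (b a), b k⟫ = 0 := by
  rw [hK.inner_diag, if_neg h.not_gt, if_neg h.ne']

theorem inner_apply_basis_comm (hK : IsOpozdaNormalForm b K lam mu) (i j k : Fin n) :
    ⟪K (b i) (b j), b k⟫ = ⟪K (b i) (b k), b j⟫ := by
  wlog hjk : j < k generalizing j k
  · rcases (not_lt.mp hjk).eq_or_lt with rfl | hkj
    · rfl
    · exact (this k j hkj).symm
  rcases lt_trichotomy i j with hij | rfl | hji
  · simp [hK.off i j hij, hK.off i k (hij.trans hjk), real_inner_smul_left,
      b.inner_eq_zero hjk.ne, b.inner_eq_zero hjk.ne']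
  · simp [hK.inner_diag_of_gt hjk, hK.off i k hjk, real_inner_smul_left,
      b.inner_eq_zero hjk.ne']
  · rcases lt_trichotomy i k with hik | rfl | hki
    · simp [hK.off' hji, hK.off i k hik, real_inner_smul_left, b.inner_eq_zero hik.ne,
        b.inner_eq_zero (hji.trans hik).ne']
    · simp [hK.off' hji, real_inner_smul_left, hK.inner_diag_of_lt hji]
    · simp [hK.off' hji, hK.off' hki, real_inner_smul_left, b.inner_eq_zero hki.ne',
        b.inner_eq_zero hji.ne']

theorem inner_symm (hK : IsOpozdaNormalForm b K lam mu) (X Y Z : V) :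
    ⟪K X Y, Z⟫ = ⟪K X Z, Y⟫ :=
  inner_apply_comm_of_basis K b.toBasis (by simpa using hK.inner_apply_basis_comm) X Y Z

variable {A : ℝ}

theorem inner_diag_diag (hK : IsOpozdaNormalForm b K lam mu)
    (hA : ∀ i, ∑ j ∈ Finset.univ.filter (· < i), mu j ^ 2 + lam i * mu i - mu i ^ 2 = A)
    {a c : Fin n} (h : a < c) :
    ⟪K (b a) (b a), K (b c) (b c)⟫ = A + mu a ^ 2 := by
  have hlt : ∀ j ∈ Finset.univ.filter (· < a), ⟪mu j • b j, K (b c) (b c)⟫ = mu j ^ 2 := by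
    intro j hj
    rw [real_inner_smul_left, real_inner_comm,
      hK.inner_diag_of_lt ((Finset.mem_filter.1 hj).2.trans h), sq]
  rw [hK.diag a, inner_add_left, sum_inner, Finset.sum_congr rfl hlt, real_inner_smul_left,
    real_inner_comm, hK.inner_diag_of_lt h, ← hA a]
  ring

theorem apply_diag_of_lt (hK : IsOpozdaNormalForm b K lam mu)
    (hA : ∀ i, ∑ j ∈ Finset.univ.filter (· < i), mu j ^ 2 + lam i * mu i - mu i ^ 2 = A)
    {i j : Fin n} (h : i < j) :
    K (b j) (K (b i) (b i)) = (A + mu i ^ 2) • b j := by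
  refine InnerProductSpace.ext_inner_left_basis b.toBasis fun l => ?_
  rw [OrthonormalBasis.coe_toBasis, real_inner_comm (K (b j) _), hK.inner_symm,
    real_inner_smul_right, b.inner_eq_ite]
  rcases lt_trichotomy l j with hlj | rfl | hjl
  · rw [hK.off' hlj, real_inner_smul_left, real_inner_comm (K (b i) (b i)) (b j),
      hK.inner_diag_of_gt h]
    simp [hlj.ne]
  · rw [real_inner_comm, hK.inner_diag_diag hA h]
    simp
  · rw [hK.off j l hjl, real_inner_smul_left, real_inner_comm (K (b i) (b i)) (b l),
      hK.inner_diag_of_gt (h.trans hjl)]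
    simp [hjl.ne']

theorem apply_diag_of_gt (hK : IsOpozdaNormalForm b K lam mu)
    (hA : ∀ i, ∑ j ∈ Finset.univ.filter (· < i), mu j ^ 2 + lam i * mu i - mu i ^ 2 = A)
    {i j : Fin n} (h : i < j) :
    K (b i) (K (b j) (b j)) = mu i • K (b j) (b j) + A • b i := by
  refine InnerProductSpace.ext_inner_left_basis b.toBasis fun l => ?_
  rw [OrthonormalBasis.coe_toBasis, real_inner_comm (K (b i) _), hK.inner_symm, inner_add_right,
    real_inner_smul_right, real_inner_smul_right, b.inner_eq_ite,
    real_inner_comm (K (b j) (b j)) (b l)]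
  rcases lt_trichotomy l i with hli | rfl | hil
  · rw [hK.off' hli, real_inner_smul_left, real_inner_comm (K (b j) (b j)) (b i),
      hK.inner_diag_of_lt h, hK.inner_diag_of_lt (hli.trans h)]
    simp [hli.ne, mul_comm]
  · rw [hK.inner_diag_diag hA h, hK.inner_diag_of_lt h]
    simp [sq, add_comm]
  · rw [hK.off i l hil, real_inner_smul_left, real_inner_comm (K (b j) (b j)) (b l)]
    simp [hil.ne']

theorem apply_apply_sub_basis (hK : IsOpozdaNormalForm b K lam mu)
    (hA : ∀ i, ∑ j ∈ Finset.univ.filter (· < i), mu j ^ 2 + lam i * mu i - mu i ^ 2 = A)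
    (i j k : Fin n) :
    K (b i) (K (b j) (b k)) - K (b j) (K (b i) (b k))
      = A • (⟪b j, b k⟫ • b i - ⟪b i, b k⟫ • b j) := by
  wlog hij : i < j generalizing i j
  · rcases (not_lt.mp hij).eq_or_lt with rfl | hji
    · simp
    · rw [← neg_sub, this j i hji, ← smul_neg, neg_sub]
  rcases lt_trichotomy i k with hik | rfl | hki
  · rcases lt_trichotomy k j with hkj | rfl | hjk
    · simp [hK.off' hkj, hK.off i k hik, hK.off i j hij, smul_smul, mul_comm,
        b.inner_eq_zero hik.ne, b.inner_eq_zero hkj.ne']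
    · rw [hK.off i k hij, map_smul, hK.apply_diag_of_gt hA hij, b.inner_eq_one,
        b.inner_eq_zero hij.ne]
      module
    · simp [hK.off j k hjk, hK.off i k (hij.trans hjk), smul_smul, mul_comm,
        b.inner_eq_zero (hij.trans hjk).ne, b.inner_eq_zero hjk.ne]
  · rw [hK.off' hij, map_smul, hK.off i j hij, hK.apply_diag_of_lt hA hij, b.inner_eq_one,
      b.inner_eq_zero hij.ne']
    module
  · simp [hK.off' hki, hK.off' (hki.trans hij), hK.off i j hij, hK.off' hij, smul_smul,
      b.inner_eq_zero hki.ne', b.inner_eq_zero (hki.trans hij).ne']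

theorem apply_apply_sub (hK : IsOpozdaNormalForm b K lam mu)
    (hA : ∀ i, ∑ j ∈ Finset.univ.filter (· < i), mu j ^ 2 + lam i * mu i - mu i ^ 2 = A)
    (X Y Z : V) :
    K X (K Y Z) - K Y (K X Z) = A • (⟪Y, Z⟫ • X - ⟪X, Z⟫ • Y) :=
  apply_apply_sub_apply_apply_of_basis K b.toBasis (by simpa using hK.apply_apply_sub_basis hA)
    X Y Z

end IsOpozdaNormalForm

theorem stmt_10_general {V : Type*} [NormedAddCommGroup V] [InnerProductSpace ℝ V]
    {n : ℕ}
    (b : OrthonormalBasis (Fin n) ℝ V)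
    (K : V →ₗ[ℝ] V →ₗ[ℝ] V)
    (hKcomm : ∀ X Y : V, K X Y = K Y X)
    (lam mu : Fin n → ℝ) (A : ℝ) (Aseq : ℕ → ℝ)
    (hA0 : Aseq 0 = A)
    (hge : ∀ i : Fin n, lam i ^ 2 - 4 * Aseq i.val ≥ 0)
    (hmu : ∀ i : Fin n, mu i = (lam i - Real.sqrt (lam i ^ 2 - 4 * Aseq i.val)) / 2)
    (hArec : ∀ i : Fin n, Aseq (i.val + 1) = Aseq i.val - mu i ^ 2)
    (hKdiag : ∀ i : Fin n,
      K (b i) (b i) = (∑ j ∈ Finset.univ.filter (fun j => j < i), mu j • b j)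
        + lam i • b i)
    (hKoff : ∀ i j : Fin n, i < j → K (b i) (b j) = mu i • b j) :
    (∀ X Y Z : V, ⟪K X Y, Z⟫ = ⟪K X Z, Y⟫) ∧
    (∀ X Y Z W : V, ⟪K X W, K Y Z⟫ - ⟪K Y W, K X Z⟫
      = A * (⟪X, W⟫ * ⟪Y, Z⟫ - ⟪Y, W⟫ * ⟪X, Z⟫)) := by
  have hK : IsOpozdaNormalForm b K lam mu := ⟨hKcomm, hKdiag, hKoff⟩
  have hA : ∀ i, ∑ j ∈ Finset.univ.filter (· < i), mu j ^ 2 + lam i * mu i - mu i ^ 2 = A := by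
    intro i
    rw [add_sub_assoc, mul_sub_sq_eq_of_eq_sub_sqrt (hge i) (hmu i),
      sum_sq_add_eq_of_eq_sub_sq hArec i, hA0]
  exact ⟨hK.inner_symm,
    inner_apply_sub_inner_apply_eq K hK.inner_symm (hK.apply_apply_sub hA)⟩

/-- if `K` is given on an orthonormal basis by Opozda's normal
form `K(e_i,e_i) = Σ_{j<i} μ_j e_j + λ_i e_i`, `K(e_i,e_j) = μ_i e_j` (`i<j`)
with `μ_i = (λ_i − √(λ_i² − 4A_{i−1}))/2`, `A_i = A_{i−1} − μ_i²`, `A_0 = A`,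
`λ_i² − 4A_{i−1} ≥ 0`, then the cubic form `g(K(X,Y),Z)` is totally symmetric
and `K` has constant sectional `K`-curvature `A`. -/
theorem stmt_10 {V : Type*} [NormedAddCommGroup V] [InnerProductSpace ℝ V]
    [FiniteDimensional ℝ V] {n : ℕ}
    (b : OrthonormalBasis (Fin n) ℝ V)
    (K : V →ₗ[ℝ] V →ₗ[ℝ] V)
    (hKcomm : ∀ X Y : V, K X Y = K Y X)
    (lam mu : Fin n → ℝ) (A : ℝ) (Aseq : ℕ → ℝ)
    (hA0 : Aseq 0 = A)
    (hge : ∀ i : Fin n, lam i ^ 2 - 4 * Aseq i.val ≥ 0)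
    (hmu : ∀ i : Fin n, mu i = (lam i - Real.sqrt (lam i ^ 2 - 4 * Aseq i.val)) / 2)
    (hArec : ∀ i : Fin n, Aseq (i.val + 1) = Aseq i.val - mu i ^ 2)
    (hKdiag : ∀ i : Fin n,
      K (b i) (b i) = (∑ j ∈ Finset.univ.filter (fun j => j < i), mu j • b j)
        + lam i • b i)
    (hKoff : ∀ i j : Fin n, i < j → K (b i) (b j) = mu i • b j) :
    (∀ X Y Z : V, ⟪K X Y, Z⟫ = ⟪K X Z, Y⟫) ∧
    (∀ X Y Z W : V, ⟪K X W, K Y Z⟫ - ⟪K Y W, K X Z⟫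
      = A * (⟪X, W⟫ * ⟪Y, Z⟫ - ⟪Y, W⟫ * ⟪X, Z⟫)) :=
  stmt_10_general b K hKcomm lam mu A Aseq hA0 hge hmu hArec hKdiag hKoff
end

section
/- Let V be a finite-dimensional real inner product space and K a symmetric bilinear map with g(K(X,Y),Z) totally symmetric. If [K,K] = 0, then the Yukawa term Y = C_{ijk}C^{ijk} − C_i C^i vanishes, where C_{ijk} are the components of C(X,Y,Z) = g(K(X,Y),Z) in an orthonormal basis, indices are raised with the metric, and C_i = Σ_j C_{ijj}. -/
open scoped RealInnerProductSpace

/-- if `[K,K] = 0` then the Yukawa term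
`Y = C_{ijk}C^{ijk} − C_i C^i` vanishes (components in an orthonormal basis,
where indices are raised with the metric, so `C^{ijk} = C_{ijk}`,
`C_i = Σ_j C_{ijj}`). -/
theorem stmt_11 {V : Type*} [NormedAddCommGroup V] [InnerProductSpace ℝ V]
    [FiniteDimensional ℝ V] {n : ℕ}
    (b : OrthonormalBasis (Fin n) ℝ V)
    (K : V →ₗ[ℝ] V →ₗ[ℝ] V)
    (hKcomm : ∀ X Y : V, K X Y = K Y X)
    (hCsym : ∀ X Y Z : V, ⟪K X Y, Z⟫ = ⟪K X Z, Y⟫)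
    (hKK : ∀ X Y Z : V, K X (K Y Z) = K Y (K X Z)) :
    (∑ i, ∑ j, ∑ k, ⟪K (b i) (b j), b k⟫ ^ 2)
      - ∑ i, (∑ j, ⟪K (b i) (b j), b j⟫) ^ 2 = 0 := by
  have parseval : ∀ x : V, ∑ i, ⟪x, b i⟫ ^ 2 = ⟪x, x⟫ := by
    intro x
    have := b.sum_inner_mul_inner x x
    simpa [sq, real_inner_comm] using this
  set w : V := ∑ i, K (b i) (b i) with hw
  have hR : ∀ i, (∑ j, ⟪K (b i) (b j), b j⟫) = ⟪w, b i⟫ := by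
    intro i
    rw [hw, sum_inner]
    refine Finset.sum_congr rfl fun j _ => ?_
    rw [hKcomm (b i) (b j), hCsym (b j) (b i) (b j), real_inner_comm]
  have hL : (∑ i, ∑ j, ∑ k, ⟪K (b i) (b j), b k⟫ ^ 2) = ⟪w, w⟫ := by
    have step1 : ∀ i j : Fin n,
        (∑ k, ⟪K (b i) (b j), b k⟫ ^ 2) = ⟪K (b i) (b i), K (b j) (b j)⟫ := by
      intro i j
      rw [show (∑ k, ⟪K (b i) (b j), b k⟫ ^ 2) = ⟪K (b i) (b j), K (b i) (b j)⟫
        from parseval _]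
      calc ⟪K (b i) (b j), K (b i) (b j)⟫
          = ⟪K (b i) (K (b i) (b j)), b j⟫ := (hCsym (b i) (K (b i) (b j)) (b j)).symm
        _ = ⟪K (b j) (K (b i) (b i)), b j⟫ := by rw [hKcomm (b i) (b j), hKK]
        _ = ⟪K (b j) (b j), K (b i) (b i)⟫ := hCsym _ _ _
        _ = ⟪K (b i) (b i), K (b j) (b j)⟫ := real_inner_comm _ _
    simp only [step1]
    rw [hw, sum_inner]
    refine Finset.sum_congr rfl fun i _ => ?_
    rw [inner_sum]
  rw [hL]
  simp only [hR]
  rw [parseval w, sub_self]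
end

section
/- In dimension 2, let C be a totally symmetric trilinear form on ℝ² (with the standard inner product scaled by a positive function value φ) with independent components f_1 = C_{111}, f_2 = C_{112}, f_3 = C_{122}, f_4 = C_{222}, and let K be the associated (1,2)-tensor via K_{ij}^k = C_{ijk}/φ. Then [K,K] = 0 if and only if f_2² + f_3² = f_1 f_3 + f_2 f_4. -/
set_option maxHeartbeats 1000000

/-- The components `C_{ijk}` of the symmetric cubic form on `ℝ²`:
`C_{111} = f₁`, `C_{112} = f₂`, `C_{122} = f₃`, `C_{222} = f₄`. -/
def cubic2 (f1 f2 f3 f4 : ℝ) (i j k : Fin 2) : ℝ :=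
  match i.val + j.val + k.val with
  | 0 => f1
  | 1 => f2
  | 2 => f3
  | _ => f4

lemma decomp2 (v : Fin 2 → ℝ) :
    v = v 0 • (Pi.single 0 1 : Fin 2 → ℝ) + v 1 • (Pi.single 1 1 : Fin 2 → ℝ) := by
  funext k; fin_cases k <;> simp

/-- on `ℝ²` with metric `g = φ·(standard)`, `φ > 0`, and `K`
defined by `g(K(X,Y),Z) = C(X,Y,Z)` (i.e. `K_{ij}^k = C_{ijk}/φ`), one has
`[K,K] = 0` iff `f₂² + f₃² = f₁f₃ + f₂f₄`. -/
theorem stmt_12 (φ : ℝ) (hφ : 0 < φ) (f1 f2 f3 f4 : ℝ)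
    (K : (Fin 2 → ℝ) →ₗ[ℝ] (Fin 2 → ℝ) →ₗ[ℝ] (Fin 2 → ℝ))
    (hK : ∀ i j k : Fin 2,
      K (Pi.single i 1) (Pi.single j 1) k = φ⁻¹ * cubic2 f1 f2 f3 f4 i j k) :
    (∀ X Y Z : Fin 2 → ℝ, K X (K Y Z) = K Y (K X Z))
      ↔ f2 ^ 2 + f3 ^ 2 = f1 * f3 + f2 * f4 := by
  have hφ' : φ ≠ 0 := ne_of_gt hφ
  have hKv : ∀ (i : Fin 2) (v : Fin 2 → ℝ) (k : Fin 2),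
      K (Pi.single i 1) v k
        = v 0 * (φ⁻¹ * cubic2 f1 f2 f3 f4 i 0 k)
          + v 1 * (φ⁻¹ * cubic2 f1 f2 f3 f4 i 1 k) := by
    intro i v k
    conv_lhs => rw [decomp2 v]
    simp [map_add, map_smul, hK]
  have KK : ∀ i j l k : Fin 2,
      K (Pi.single i 1) (K (Pi.single j 1) (Pi.single l 1)) k
        = (φ⁻¹ * cubic2 f1 f2 f3 f4 j l 0) * (φ⁻¹ * cubic2 f1 f2 f3 f4 i 0 k)
          + (φ⁻¹ * cubic2 f1 f2 f3 f4 j l 1) * (φ⁻¹ * cubic2 f1 f2 f3 f4 i 1 k) := by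
    intro i j l k
    rw [hKv, hK, hK]
  constructor
  · intro h
    have h1 := congrFun (h (Pi.single 0 1) (Pi.single 1 1) (Pi.single 0 1)) 1
    rw [KK, KK] at h1
    simp [cubic2] at h1
    field_simp at h1
    linarith
  · intro h X Y Z
    funext k
    rw [decomp2 X, decomp2 Y, decomp2 Z]
    simp only [map_add, map_smul, LinearMap.add_apply, LinearMap.smul_apply,
      Pi.add_apply, Pi.smul_apply, smul_eq_mul, KK]
    fin_cases k
    · simp only [cubic2]
      linear_combination (X 1 * Y 0 - X 0 * Y 1) * Z 1 * φ⁻¹ * φ⁻¹ * h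
    · simp only [cubic2]
      linear_combination (X 0 * Y 1 - X 1 * Y 0) * Z 0 * φ⁻¹ * φ⁻¹ * h
end

section
/- In the 2-dimensional setting with metric g = φ(dx² + dy²) and symmetric cubic form with components f_1 = C_{111}, f_2 = C_{112}, f_3 = C_{122}, f_4 = C_{222}, the Yukawa term equals Y = (2/φ³)(f_2² + f_3² − f_1 f_3 − f_2 f_4). Consequently Y = 0 if and only if [K,K] = 0. -/
/-- on `ℝ²` with metric `g_{ij} = φ δ_{ij}`, `φ > 0`, the Yukawa
term `Y = C_{ijk}C^{ijk} − C_i C^i` (indices raised by `g^{ij} = φ⁻¹δ_{ij}`,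
`C_i = C_{ijk}g^{jk}`) equals `(2/φ³)(f₂² + f₃² − f₁f₃ − f₂f₄)`; consequently
`Y = 0` iff `[K,K] = 0`. -/
theorem stmt_13 (φ : ℝ) (hφ : 0 < φ) (f1 f2 f3 f4 : ℝ)
    (K : (Fin 2 → ℝ) →ₗ[ℝ] (Fin 2 → ℝ) →ₗ[ℝ] (Fin 2 → ℝ))
    (hK : ∀ i j k : Fin 2,
      K (Pi.single i 1) (Pi.single j 1) k = φ⁻¹ * cubic2 f1 f2 f3 f4 i j k)
    (Y : ℝ)
    (hY : Y = φ⁻¹ ^ 3 * ((∑ i, ∑ j, ∑ k, cubic2 f1 f2 f3 f4 i j k ^ 2)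
      - ∑ i, (∑ j, cubic2 f1 f2 f3 f4 i j j) ^ 2)) :
    Y = 2 / φ ^ 3 * (f2 ^ 2 + f3 ^ 2 - f1 * f3 - f2 * f4) ∧
    (Y = 0 ↔ ∀ X Y' Z : Fin 2 → ℝ, K X (K Y' Z) = K Y' (K X Z)) := by
  have hφ0 : φ ≠ 0 := ne_of_gt hφ
  have hrep : ∀ v : Fin 2 → ℝ, v = v 0 • (Pi.single 0 1 : Fin 2 → ℝ) + v 1 • (Pi.single 1 1 : Fin 2 → ℝ) := by
    intro v; funext k; fin_cases k <;> simp
  have hKXW : ∀ (X W : Fin 2 → ℝ) (k : Fin 2),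
      K X W k = ∑ i, ∑ j, X i * W j * (φ⁻¹ * cubic2 f1 f2 f3 f4 i j k) := by
    intro X W k
    conv_lhs => rw [hrep X, hrep W]
    simp only [map_add, map_smul, LinearMap.add_apply, LinearMap.smul_apply,
      Pi.add_apply, Pi.smul_apply, smul_eq_mul, Fin.sum_univ_two, hK]
    ring
  have hYval : Y = 2 / φ ^ 3 * (f2 ^ 2 + f3 ^ 2 - f1 * f3 - f2 * f4) := by
    rw [hY]
    simp only [Fin.sum_univ_two]
    norm_num [cubic2]
    field_simp
    ring
  refine ⟨hYval, ?_⟩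
  constructor
  · intro h0
    have hR : f2 ^ 2 + f3 ^ 2 - f1 * f3 - f2 * f4 = 0 := by
      rw [hYval] at h0
      have h2 : (2 : ℝ) / φ ^ 3 ≠ 0 := by positivity
      exact (mul_eq_zero.mp h0).resolve_left h2
    intro X Y' Z
    funext k
    rw [hKXW, hKXW]
    simp only [hKXW, Fin.sum_univ_two]
    norm_num [cubic2]
    fin_cases k
    · norm_num [cubic2]
      linear_combination (-(φ⁻¹)^2 * (X 0 * Y' 1 - X 1 * Y' 0) * Z 1) * hR
    · norm_num [cubic2]
      linear_combination ((φ⁻¹)^2 * (X 0 * Y' 1 - X 1 * Y' 0) * Z 0) * hR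
  · intro hc
    rw [hYval]
    have h := congrFun (hc (Pi.single 0 1) (Pi.single 1 1) (Pi.single 0 1)) 1
    rw [hKXW, hKXW] at h
    simp only [hKXW, Fin.sum_univ_two] at h
    norm_num [cubic2, Pi.single_apply] at h
    have hR : f2 ^ 2 + f3 ^ 2 - f1 * f3 - f2 * f4 = 0 := by
      have hφ2 : (φ⁻¹)^2 ≠ 0 := by positivity
      field_simp at h
      nlinarith [h]
    rw [hR, mul_zero]
end

section
/- Let V be a real inner product space, K a symmetric bilinear map with g(K(X,Y),Z) totally symmetric. Suppose K is the zero curvature case: [K,K] = 0 and K is non-degenerate, with orthonormal eigenbasis e_i, K(e_i,e_i) = λ_i e_i, λ_i ≠ 0. Then the idempotents u_i := (1/λ_i) e_i satisfy u_i ∘ u_i = u_i and u_i ∘ u_j = 0 for i ≠ j, and they are the unique (up to reordering) nonzero elements with these properties. -/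
open scoped RealInnerProductSpace

/-- in the zero sectional `K`-curvature, non-degenerate case with
orthonormal eigenbasis `e_i`, `K(e_i,e_i) = λ_i e_i`, `λ_i ≠ 0`, the vectors
`u_i := λ_i⁻¹ e_i` satisfy `u_i ∘ u_i = u_i`, `u_i ∘ u_j = 0` (`i ≠ j`), and
they are the unique (up to reordering) family of nonzero elements with these
properties. -/
theorem stmt_14 {V : Type*} [NormedAddCommGroup V] [InnerProductSpace ℝ V]
    [FiniteDimensional ℝ V] {n : ℕ}
    (b : OrthonormalBasis (Fin n) ℝ V)
    (K : V →ₗ[ℝ] V →ₗ[ℝ] V)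
    (hKcomm : ∀ X Y : V, K X Y = K Y X)
    (hCsym : ∀ X Y Z : V, ⟪K X Y, Z⟫ = ⟪K X Z, Y⟫)
    (lam : Fin n → ℝ) (hlam : ∀ i, lam i ≠ 0)
    (hdiag : ∀ i, K (b i) (b i) = lam i • b i)
    (hoff : ∀ i j, i ≠ j → K (b i) (b j) = 0) :
    (∀ i, K ((lam i)⁻¹ • b i) ((lam i)⁻¹ • b i) = (lam i)⁻¹ • b i) ∧
    (∀ i j, i ≠ j → K ((lam i)⁻¹ • b i) ((lam j)⁻¹ • b j) = 0) ∧
    (∀ v : Fin n → V, (∀ i, v i ≠ 0) → (∀ i, K (v i) (v i) = v i) →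
      (∀ i j, i ≠ j → K (v i) (v j) = 0) →
      ∃ σ : Equiv.Perm (Fin n), ∀ i, v i = (lam (σ i))⁻¹ • b (σ i)) := by
  have hob : ∀ i j : Fin n, ⟪b i, b j⟫ = if i = j then (1:ℝ) else 0 := by
    have := b.orthonormal
    rw [orthonormal_iff_ite] at this
    intro i j
    simpa using this i j
  -- extensionality via inner products with the basis
  have hext : ∀ X Y : V, (∀ m, ⟪b m, X⟫ = ⟪b m, Y⟫) → X = Y := by
    intro X Y h
    rw [← b.sum_repr' X, ← b.sum_repr' Y]
    exact Finset.sum_congr rfl fun m _ => by rw [h m]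
  -- action of K(b m, ·)
  have hKbX : ∀ (m : Fin n) (X : V), K (b m) X = (lam m * ⟪b m, X⟫) • b m := by
    intro m X
    conv_lhs => rw [← b.sum_repr' X]
    rw [map_sum, Finset.sum_eq_single m]
    · rw [map_smul, hdiag, smul_smul, mul_comm]
    · intro k _ hk
      rw [map_smul, hoff m k (Ne.symm hk), smul_zero]
    · intro h; exact absurd (Finset.mem_univ m) h
  -- coordinates of K X Y
  have key : ∀ (X Y : V) (m : Fin n), ⟪b m, K X Y⟫ = ⟪b m, X⟫ * ⟪b m, Y⟫ * lam m := by
    intro X Y m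
    rw [real_inner_comm, hCsym, hKcomm, hKbX, real_inner_smul_left]
    ring
  refine ⟨?_, ?_, ?_⟩
  · intro i
    simp only [map_smul, LinearMap.smul_apply, hdiag, smul_smul]
    congr 1
    field_simp
  · intro i j hij
    simp only [map_smul, LinearMap.smul_apply, hoff i j hij, smul_zero]
  · intro v hv0 hvi hvo
    set c : Fin n → Fin n → ℝ := fun i k => ⟪b k, v i⟫ with hc
    have hidem : ∀ i k, c i k = 0 ∨ c i k = (lam k)⁻¹ := by
      intro i k
      have h := key (v i) (v i) k
      rw [hvi i] at h
      by_cases h0 : c i k = 0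
      · exact Or.inl h0
      · right
        have h2 : c i k * (c i k * lam k) = c i k * 1 := by
          rw [mul_one, ← mul_assoc]; exact h.symm
        exact eq_inv_of_mul_eq_one_left (mul_left_cancel₀ h0 h2)
    have horth : ∀ i j k, i ≠ j → c i k = 0 ∨ c j k = 0 := by
      intro i j k hij
      have h := key (v i) (v j) k
      rw [hvo i j hij, inner_zero_right] at h
      rcases mul_eq_zero.mp h.symm with h' | h'
      · exact mul_eq_zero.mp h'
      · exact absurd h' (hlam k)
    have hex : ∀ i, ∃ k, c i k ≠ 0 := by
      intro i
      by_contra h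
      push_neg at h
      exact hv0 i (hext (v i) 0 fun m => by rw [inner_zero_right]; exact h m)
    choose f hf using hex
    have hbij : Function.Bijective f := by
      rw [Finite.injective_iff_bijective.symm]
      intro i j hij
      by_contra hne
      rcases horth i j (f i) hne with h | h
      · exact hf i h
      · rw [hij] at h; exact hf j h
    have hck : ∀ i k, k ≠ f i → c i k = 0 := by
      intro i k hk
      by_contra h0
      obtain ⟨j, hj⟩ := hbij.surjective k
      have hji : i ≠ j := fun h => hk (by rw [← hj, h])
      rcases horth i j k hji with h | h
      · exact h0 h
      · exact hf j (by rw [hj]; exact h)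
    refine ⟨Equiv.ofBijective f hbij, fun i => ?_⟩
    apply hext
    intro m
    rw [Equiv.ofBijective_apply, real_inner_smul_right, hob]
    by_cases hm : m = f i
    · subst hm
      rcases hidem i (f i) with h | h
      · exact absurd h (hf i)
      · rw [if_pos rfl, mul_one]; exact h
    · rw [if_neg hm, mul_zero]
      exact hck i m hm
end
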